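/- arXiv:0910.1808 — 7 statements merged into one kernel-verified Lean document; each statement's English description precedes it below -/
import Mathlib

section
/- Whether an arbitrary graph on n vertices with m edges contains an induced building can be decided by the following procedure: for every vertex v and every edge xy with x,y ∈ N(v), the graph contains a building using triangle v,x,y if and only if in the graph obtained by deleting all neighbours of v other than x and y, deleting v itself, deleting all vertices of N(x) ∩ N(y), and deleting the edge xy, there is a path from x to y. (Correctness statement: G contains an induced building if and only if there exist such v and edge xy for which that reduced graph has an x–y path.) -/
open SimpleGraph

universe u

variable {V : Type u}

/-- The cycle on `ZMod k`. -/
def cyc (k : ℕ) : SimpleGraph (ZMod k) :=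
  SimpleGraph.fromRel (fun i j => j = i + 1)

/-- A building on `k` vertices: the cycle `0,1,...,k-1` together with the single
chord `{0,2}`, which forms a triangle with the cycle edges `01` and `12`. -/
def buildingGraph (k : ℕ) : SimpleGraph (ZMod k) :=
  SimpleGraph.fromRel (fun i j => j = i + 1 ∨ (i = 0 ∧ j = 2))

def HasBuilding (G : SimpleGraph V) : Prop :=
  ∃ k, 5 ≤ k ∧ Nonempty (buildingGraph k ↪g G)

def BuildingFree (G : SimpleGraph V) : Prop := ¬ HasBuilding G

/-- A hole is an induced cycle on at least five vertices. -/
def HasHole (G : SimpleGraph V) : Prop :=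
  ∃ k, 5 ≤ k ∧ Nonempty (cyc k ↪g G)

/-- Chordal: no induced cycle on four or more vertices. -/
def IsChordal (G : SimpleGraph V) : Prop :=
  ∀ k, 4 ≤ k → IsEmpty (cyc k ↪g G)

/-- The gem: the path `0-1-2-3` plus vertex `4` adjacent to all of `0,1,2,3`. -/
def gemGraph : SimpleGraph (Fin 5) :=
  SimpleGraph.fromRel (fun i j =>
    (i = 0 ∧ j = 1) ∨ (i = 1 ∧ j = 2) ∨ (i = 2 ∧ j = 3) ∨ i = 4)

/-- The bull: the path `0-1-2-3` plus the nose `4` adjacent exactly to `1` and `2`. -/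
def bullGraph : SimpleGraph (Fin 5) :=
  SimpleGraph.fromRel (fun i j =>
    (i = 0 ∧ j = 1) ∨ (i = 1 ∧ j = 2) ∨ (i = 2 ∧ j = 3) ∨ (i = 4 ∧ (j = 1 ∨ j = 2)))

/-- The path on four vertices. -/
def p4Graph : SimpleGraph (Fin 4) :=
  SimpleGraph.fromRel (fun i j => (i = 0 ∧ j = 1) ∨ (i = 1 ∧ j = 2) ∨ (i = 2 ∧ j = 3))

/-- The domino: 6-cycle `0-1-2-3-4-5-0` plus chord `{1,4}`. -/
def dominoGraph : SimpleGraph (Fin 6) :=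
  SimpleGraph.fromRel (fun i j =>
    (i = 0 ∧ j = 1) ∨ (i = 1 ∧ j = 2) ∨ (i = 2 ∧ j = 3) ∨ (i = 3 ∧ j = 4) ∨
    (i = 4 ∧ j = 5) ∨ (i = 5 ∧ j = 0) ∨ (i = 1 ∧ j = 4))

/-- The `k`-sun: clique of centers `inl i`, independent tips `inr d`,
with tip `inr d` adjacent exactly to centers `inl d` and `inl (d+1)`. -/
def sunGraph (k : ℕ) : SimpleGraph (ZMod k ⊕ ZMod k) :=
  SimpleGraph.fromRel (fun a b =>
    match a, b with
    | Sum.inl _, Sum.inl _ => True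
    | Sum.inl c, Sum.inr d => c = d ∨ c = d + 1
    | _, _ => False)

def HasSun (G : SimpleGraph V) : Prop :=
  ∃ k, 3 ≤ k ∧ Nonempty (sunGraph k ↪g G)

/-- Closed neighbourhood. -/
def closedNbhd (G : SimpleGraph V) (v : V) : Set V := insert v (G.neighborSet v)

/-- `u` `X`-dominates `v` : `N(v) ∩ X ⊆ N[u] ∩ X`. -/
def NDom (G : SimpleGraph V) (X : Set V) (u v : V) : Prop :=
  G.neighborSet v ∩ X ⊆ closedNbhd G u ∩ X

/-- An induced path in `G` (as a walk): it is a path and the only edges of `G`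
between vertices of the walk are the edges of the walk. -/
def IsInducedPathW (G : SimpleGraph V) {u v : V} (p : G.Walk u v) : Prop :=
  p.IsPath ∧ ∀ a ∈ p.support, ∀ b ∈ p.support, G.Adj a b → s(a, b) ∈ p.edges

/-- A sunflower in `G` with `k ≥ 3` center vertices `c i` and petals `P i`:
each petal is an induced path of length at least two joining consecutive centers,
distinct petals meet only at centers, and the whole configuration is an induced
subgraph of `G` (the only edges between sunflower vertices are petal edges and
edges between center vertices). -/
structure Sunflower (G : SimpleGraph V) (k : ℕ) where
  c : ZMod k → V
  P : ∀ i : ZMod k, G.Walk (c i) (c (i + 1))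
  hk : 3 ≤ k
  hinj : Function.Injective c
  hlen : ∀ i, 2 ≤ (P i).length
  hpath : ∀ i, (P i).IsPath
  hmeet : ∀ i j, i ≠ j → ∀ w, w ∈ (P i).support → w ∈ (P j).support →
    w = c i ∨ w = c (i + 1)
  hind : ∀ a b, (∃ i, a ∈ (P i).support) → (∃ j, b ∈ (P j).support) →
    G.Adj a b → ((∃ i, s(a, b) ∈ (P i).edges) ∨ ((∃ i, a = c i) ∧ ∃ j, b = c j))

/-- Closed neighbourhood of `v` within a set `s`. -/
def cN (G : SimpleGraph V) (s : Set V) (v : V) : Set V :=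
  {u | u ∈ s ∧ (u = v ∨ G.Adj v u)}

/-- `x` is simple in the subgraph of `G` induced by `s`: the closed neighbourhoods
(within `s`) of the neighbours of `x` in `s` form a chain under inclusion. -/
def IsSimpleIn (G : SimpleGraph V) (s : Set V) (x : V) : Prop :=
  ∀ y ∈ s, ∀ z ∈ s, G.Adj x y → G.Adj x z →
    cN G s y ⊆ cN G s z ∨ cN G s z ⊆ cN G s y

/-- The graph obtained from `G` by deleting all neighbours of `v` other than
`x` and `y`, deleting `v`, deleting all common neighbours of `x` and `y`,
and deleting the edge `xy`. -/
def reducedGraph (G : SimpleGraph V) (v x y : V) : SimpleGraph V where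
  Adj a b := G.Adj a b ∧ a ≠ v ∧ b ≠ v ∧
    (¬ G.Adj v a ∨ a = x ∨ a = y) ∧ (¬ G.Adj v b ∨ b = x ∨ b = y) ∧
    ¬ (G.Adj x a ∧ G.Adj y a) ∧ ¬ (G.Adj x b ∧ G.Adj y b) ∧
    ¬ (a = x ∧ b = y) ∧ ¬ (a = y ∧ b = x)
  symm := ⟨by
    rintro a b ⟨h1, h2, h3, h4, h5, h6, h7, h8, h9⟩
    exact ⟨h1.symm, h3, h2, h5, h4, h7, h6,
      fun hc => h9 ⟨hc.2, hc.1⟩, fun hc => h8 ⟨hc.2, hc.1⟩⟩⟩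
  loopless := ⟨fun a h => G.irrefl h.1⟩


/-!
A building with triangle `v x y` consists of the triangle and an induced path from `x` to `y`
of length at least three avoiding the other neighbours of `v`; its interior vertices are never
common neighbours of `x` and `y`, so the path lives in `reducedGraph G v x y`. Conversely, a
shortest `x`–`y` path in the reduced graph is induced there; since its vertices survive the
reduction, its only extra edge in `G` is `xy`, and it has length at least three because `xy`
was deleted and common neighbours of `x` and `y` were removed. Closing it up with `v`, which
sees only `x` and `y` on it, gives a building.
-/

namespace SimpleGraph

theorem Reachable.of_forall_adj_succ {G : SimpleGraph V} (p : ℕ → V) {m n : ℕ} (hmn : m ≤ n)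
    (h : ∀ i, m ≤ i → i < n → G.Adj (p i) (p (i + 1))) : G.Reachable (p m) (p n) := by
  induction n, hmn using Nat.le_induction with
  | base => rfl
  | succ n hmn ih =>
    exact (ih fun i hi hin => h i hi (by omega)).trans (h n hmn (by omega)).reachable

namespace Walk

variable {G : SimpleGraph V} {a b : V} {p : G.Walk a b}

theorem dist_getVert_of_length_eq_dist (hp : p.length = G.dist a b) {i : ℕ}
    (hi : i ≤ p.length) : G.dist a (p.getVert i) = i := by
  rw [← length_eq_dist_of_subwalk hp (p.isSubwalk_take i), take_length]
  omega

theorem getVert_injOn_of_length_eq_dist (hp : p.length = G.dist a b) :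
    Set.InjOn p.getVert {i | i ≤ p.length} := fun i hi j hj hij => by
  rw [← dist_getVert_of_length_eq_dist hp hi, hij, dist_getVert_of_length_eq_dist hp hj]

theorem eq_succ_or_succ_eq_of_adj_getVert (hp : p.length = G.dist a b) {i j : ℕ}
    (hi : i ≤ p.length) (hj : j ≤ p.length) (h : G.Adj (p.getVert i) (p.getVert j)) :
    j = i + 1 ∨ i = j + 1 := by
  have hij := h.reachable.dist_triangle_right a
  have hji := h.symm.reachable.dist_triangle_right a
  rw [dist_eq_one_iff_adj.2 h, dist_getVert_of_length_eq_dist hp hi,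
    dist_getVert_of_length_eq_dist hp hj] at hij
  rw [dist_eq_one_iff_adj.2 h.symm, dist_getVert_of_length_eq_dist hp hi,
    dist_getVert_of_length_eq_dist hp hj] at hji
  have : i ≠ j := by rintro rfl; exact h.ne rfl
  omega

end Walk

end SimpleGraph

section Reduction

variable {G : SimpleGraph V} {v x y : V}

def reducedSupport (G : SimpleGraph V) (v x y : V) : Set V :=
  {a | a ≠ v ∧ (G.Adj v a → a = x ∨ a = y) ∧ ¬ (G.Adj x a ∧ G.Adj y a)}

theorem reducedGraph_adj_iff {a b : V} :
    (reducedGraph G v x y).Adj a b ↔ G.Adj a b ∧ a ∈ reducedSupport G v x y ∧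
      b ∈ reducedSupport G v x y ∧ s(a, b) ≠ s(x, y) := by
  simp only [reducedGraph, reducedSupport, Set.mem_ofPred_eq, ne_eq, Sym2.eq_iff, imp_iff_not_or]
  tauto

theorem mem_reducedSupport_of_adj (hvx : G.Adj v x) : x ∈ reducedSupport G v x y :=
  ⟨hvx.ne', fun _ => .inl rfl, fun h => G.irrefl h.1⟩

theorem getVert_mem_reducedSupport (hx : x ∈ reducedSupport G v x y)
    (q : (reducedGraph G v x y).Walk x y) {i : ℕ} (hi : i ≤ q.length) :
    q.getVert i ∈ reducedSupport G v x y := by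
  rcases i with _ | i
  · simpa using hx
  · exact (reducedGraph_adj_iff.1 (q.adj_getVert_succ (by omega : i < q.length))).2.2.1

theorem three_le_length_of_reducedGraph_walk (hxy : G.Adj x y)
    (q : (reducedGraph G v x y).Walk x y) : 3 ≤ q.length := by
  rcases q with _ | ⟨hxa, _ | ⟨hay, _ | ⟨_, _⟩⟩⟩
  · exact (G.irrefl hxy).elim
  · exact ((reducedGraph_adj_iff.1 hxa).2.2.2 rfl).elim
  · exact ((reducedGraph_adj_iff.1 hay).2.1.2.2 ⟨hxa.1, hay.1.symm⟩).elim
  · simp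

end Reduction

section BuildingGraph

variable {k : ℕ}

theorem ZMod.eq_add_one_iff_val (hk : 1 < k) (a b : ZMod k) :
    b = a + 1 ↔ b.val = a.val + 1 ∨ (a.val + 1 = k ∧ b.val = 0) := by
  have : NeZero k := ⟨by omega⟩
  have : Fact (1 < k) := ⟨hk⟩
  rw [← (ZMod.val_injective k).eq_iff, ZMod.val_add, ZMod.val_one]
  have := a.val_lt
  have := b.val_lt
  rcases Nat.lt_or_ge (a.val + 1) k with h | h
  · rw [Nat.mod_eq_of_lt h]; omega
  · rw [show a.val + 1 = k by omega, Nat.mod_self]; omega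

theorem ZMod.val_two (hk : 2 < k) : (2 : ZMod k).val = 2 :=
  ZMod.val_ofNat_of_lt hk

theorem buildingGraph_adj_iff_val (hk : 5 ≤ k) (a b : ZMod k) :
    (buildingGraph k).Adj a b ↔ a.val ≠ b.val ∧
      (b.val = a.val + 1 ∨ a.val = b.val + 1 ∨ (a.val + 1 = k ∧ b.val = 0) ∨
        (b.val + 1 = k ∧ a.val = 0) ∨ (a.val = 0 ∧ b.val = 2) ∨
        (a.val = 2 ∧ b.val = 0)) := by
  have : NeZero k := ⟨by omega⟩
  have e2 (c : ZMod k) : c = 2 ↔ c.val = 2 := by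
    rw [← ZMod.val_two (k := k) (by omega), (ZMod.val_injective k).eq_iff]
  rw [buildingGraph, fromRel_adj, ZMod.eq_add_one_iff_val (by omega) a b,
    ZMod.eq_add_one_iff_val (by omega) b a, ← ZMod.val_eq_zero a, ← ZMod.val_eq_zero b,
    (ZMod.val_injective k).ne_iff.symm, e2 a, e2 b]
  tauto

theorem buildingGraph_eq_zero_or_eq_two_of_adj_one (hk : 5 ≤ k) {c : ZMod k}
    (h : (buildingGraph k).Adj 1 c) : c = 0 ∨ c = 2 := by
  have : NeZero k := ⟨by omega⟩
  have : Fact (1 < k) := ⟨by omega⟩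
  rw [buildingGraph_adj_iff_val hk, ZMod.val_one] at h
  rw [← ZMod.val_eq_zero, ← (ZMod.val_injective k).eq_iff, ZMod.val_two (by omega)]
  omega

theorem buildingGraph_eq_one_of_adj_zero_of_adj_two (hk : 5 ≤ k) {c : ZMod k}
    (h0 : (buildingGraph k).Adj 0 c) (h2 : (buildingGraph k).Adj 2 c) : c = 1 := by
  have : NeZero k := ⟨by omega⟩
  have : Fact (1 < k) := ⟨by omega⟩
  rw [buildingGraph_adj_iff_val hk, ZMod.val_zero] at h0
  rw [buildingGraph_adj_iff_val hk, ZMod.val_two (by omega)] at h2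
  rw [← (ZMod.val_injective k).eq_iff, ZMod.val_one]
  omega

theorem buildingGraph_triangle (hk : 5 ≤ k) :
    (buildingGraph k).Adj 1 0 ∧ (buildingGraph k).Adj 1 2 ∧ (buildingGraph k).Adj 0 2 := by
  have : NeZero k := ⟨by omega⟩
  have : Fact (1 < k) := ⟨by omega⟩
  simp only [buildingGraph_adj_iff_val hk, ZMod.val_zero, ZMod.val_one,
    ZMod.val_two (k := k) (by omega)]
  lia

end BuildingGraph

section Detection

variable {G : SimpleGraph V} {k : ℕ}

theorem mem_reducedSupport_of_buildingGraph (f : buildingGraph k ↪g G) (hk : 5 ≤ k)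
    {c : ZMod k} (hc : c ≠ 1) : f c ∈ reducedSupport G (f 1) (f 0) (f 2) :=
  ⟨f.injective.ne hc,
    fun h => (buildingGraph_eq_zero_or_eq_two_of_adj_one hk (f.map_rel_iff.1 h)).imp
      (congrArg f) (congrArg f),
    fun h => hc (buildingGraph_eq_one_of_adj_zero_of_adj_two hk (f.map_rel_iff.1 h.1)
      (f.map_rel_iff.1 h.2))⟩

theorem reducedGraph_adj_add_one_of_buildingGraph (f : buildingGraph k ↪g G) (hk : 5 ≤ k)
    {i : ZMod k} (h0 : i ≠ 0) (h1 : i ≠ 1) :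
    (reducedGraph G (f 1) (f 0) (f 2)).Adj (f i) (f (i + 1)) := by
  have : NeZero k := ⟨by omega⟩
  have : Fact (1 < k) := ⟨by omega⟩
  have h3 : (3 : ZMod k) ≠ 0 := fun h => by
    simpa [h] using ZMod.val_ofNat_of_lt (n := k) (a := 3) (by omega)
  have hne : s(i, i + 1) ≠ s(0, 2) := by
    rw [Ne, Sym2.eq_iff]
    rintro (⟨rfl, -⟩ | ⟨rfl, h⟩)
    exacts [h0 rfl, h3 (by rw [← h]; norm_num)]
  rw [reducedGraph_adj_iff, ← Sym2.map_mk, ← Sym2.map_mk,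
    (Sym2.map.injective f.injective).ne_iff]
  refine ⟨f.map_rel_iff.2 ?_, mem_reducedSupport_of_buildingGraph f hk h1,
    mem_reducedSupport_of_buildingGraph f hk fun h => h0 (by simpa using h), hne⟩
  simp [buildingGraph, fromRel_adj]

theorem reducedGraph_reachable_of_buildingGraph (f : buildingGraph k ↪g G) (hk : 5 ≤ k) :
    (reducedGraph G (f 1) (f 0) (f 2)).Reachable (f 2) (f 0) := by
  have : NeZero k := ⟨by omega⟩
  have : Fact (1 < k) := ⟨by omega⟩
  have h := Reachable.of_forall_adj_succ (fun n : ℕ => f n) (show 2 ≤ k by omega)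
    fun n h2 hn => by
      have hval : (n : ZMod k).val = n := ZMod.val_cast_of_lt hn
      rw [Nat.cast_succ]
      refine reducedGraph_adj_add_one_of_buildingGraph f hk (fun h => ?_) (fun h => ?_) <;>
        simp [h, ZMod.val_one] at hval <;> omega
  simpa using h

theorem hasBuilding_of_inducedCycle_of_apex {L : ℕ} (hL : 3 ≤ L) (p : ℕ → V) (v : V)
    (hinj : Set.InjOn p {i | i ≤ L})
    (hadj : ∀ i ≤ L, ∀ j ≤ L, G.Adj (p i) (p j) ↔
      j = i + 1 ∨ i = j + 1 ∨ (i = 0 ∧ j = L) ∨ (i = L ∧ j = 0))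
    (hv : ∀ i ≤ L, p i ≠ v) (hvadj : ∀ i ≤ L, G.Adj v (p i) ↔ i = 0 ∨ i = L) :
    HasBuilding G := by
  have : NeZero (L + 2) := ⟨by omega⟩
  -- `σ i = (-i).val`: building vertex `i ≠ 1` goes to `p (-i)`,
  -- so `0 ↦ p 0`, `2 ↦ p L`, `-1 ↦ p 1`
  let σ : ZMod (L + 2) → ℕ := fun i => if i.val = 0 then 0 else L + 2 - i.val
  let g : ZMod (L + 2) → V := fun i => if i.val = 1 then v else p (σ i)
  have hσ (i : ZMod (L + 2)) (hi : i.val ≠ 1) : σ i ≤ L := by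
    have := i.val_lt
    simp only [σ]; split_ifs <;> omega
  have hg_inj : Function.Injective g := by
    intro i j hij
    apply ZMod.val_injective
    have := i.val_lt
    have := j.val_lt
    by_cases hi : i.val = 1 <;> by_cases hj : j.val = 1 <;>
      simp only [g, hi, hj, if_true, if_false] at hij
    · omega
    · exact (hv _ (hσ j hj) hij.symm).elim
    · exact (hv _ (hσ i hi) hij).elim
    · have := hinj (hσ i hi) (hσ j hj) hij
      simp only [σ] at this
      split_ifs at this <;> omega
  refine ⟨L + 2, by omega, ⟨⟨⟨g, hg_inj⟩, fun {i j} => ?_⟩⟩⟩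
  show G.Adj (g i) (g j) ↔ _
  have := i.val_lt
  have := j.val_lt
  rw [buildingGraph_adj_iff_val (by omega)]
  by_cases hi : i.val = 1 <;> by_cases hj : j.val = 1 <;>
    simp only [g, hi, hj, if_true, if_false]
  · simp only [G.irrefl, false_iff]; omega
  · rw [hvadj _ (hσ j hj)]; simp only [σ]; split_ifs <;> lia
  · rw [G.adj_comm, hvadj _ (hσ i hi)]; simp only [σ]; split_ifs <;> lia
  · rw [hadj _ (hσ i hi) _ (hσ j hj)]; simp only [σ]; split_ifs <;> lia

theorem hasBuilding_of_reducedGraph_reachable {v x y : V} (hvx : G.Adj v x) (hvy : G.Adj v y)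
    (hxy : G.Adj x y) (h : (reducedGraph G v x y).Reachable x y) : HasBuilding G := by
  obtain ⟨q, hq⟩ := h.exists_walk_length_eq_dist
  have hinj := q.getVert_injOn_of_length_eq_dist hq
  have hS (i : ℕ) (hi : i ≤ q.length) : q.getVert i ∈ reducedSupport G v x y :=
    getVert_mem_reducedSupport (mem_reducedSupport_of_adj hvx) q hi
  have hx (i : ℕ) (hi : i ≤ q.length) : q.getVert i = x ↔ i = 0 :=
    ⟨fun h => hinj hi (Nat.zero_le _) (h.trans q.getVert_zero.symm), by rintro rfl; simp⟩
  have hy (i : ℕ) (hi : i ≤ q.length) : q.getVert i = y ↔ i = q.length :=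
    ⟨fun h => hinj hi (show q.length ≤ q.length from le_rfl) (h.trans q.getVert_length.symm),
      by rintro rfl; simp⟩
  refine hasBuilding_of_inducedCycle_of_apex (three_le_length_of_reducedGraph_walk hxy q)
    q.getVert v hinj (fun i hi j hj => ⟨fun hG => ?_, ?_⟩) (fun i hi => (hS i hi).1)
    (fun i hi => ⟨fun h => ((hS i hi).2.1 h).imp (hx i hi).1 (hy i hi).1, ?_⟩)
  · by_cases hxy' : s(q.getVert i, q.getVert j) = s(x, y)
    · rw [Sym2.eq_iff, hx i hi, hx j hj, hy i hi, hy j hj] at hxy'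
      omega
    · exact (q.eq_succ_or_succ_eq_of_adj_getVert hq hi hj
        (reducedGraph_adj_iff.2 ⟨hG, hS i hi, hS j hj, hxy'⟩)).imp_right .inl
  · rintro (rfl | rfl | ⟨rfl, rfl⟩ | ⟨rfl, rfl⟩)
    · exact (reducedGraph_adj_iff.1 (q.adj_getVert_succ (by omega))).1
    · exact (reducedGraph_adj_iff.1 (q.adj_getVert_succ (by omega))).1.symm
    · simpa using hxy
    · simpa using hxy.symm
  · rintro (rfl | rfl) <;> simpa

end Detection

/-- `G` contains an induced building if and only if for some vertex
`v` and some edge `xy` inside `N(v)` there is an `x`–`y` path in the reduced graph. -/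
theorem building_detection (G : SimpleGraph V) :
    HasBuilding G ↔ ∃ v x y : V, G.Adj v x ∧ G.Adj v y ∧ G.Adj x y ∧
      (reducedGraph G v x y).Reachable x y := by
  constructor
  · rintro ⟨k, hk, ⟨f⟩⟩
    obtain ⟨h10, h12, h02⟩ := buildingGraph_triangle hk
    exact ⟨f 1, f 0, f 2, f.map_rel_iff.2 h10, f.map_rel_iff.2 h12, f.map_rel_iff.2 h02,
      (reducedGraph_reachable_of_buildingGraph f hk).symm⟩
  · rintro ⟨v, x, y, hvx, hvy, hxy, h⟩
    exact hasBuilding_of_reducedGraph_reachable hvx hvy hxy h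
end

section
/- Let G be a building-free graph containing a sunflower with exactly 3 center vertices in which some petal has exactly two edges and its petal vertex is simplicial in the sunflower, and suppose the sunflower is vertex-minimal with these properties. Then this sunflower is a 3-sun. -/
open SimpleGraph

universe u

variable {V : Type u}

/-! The middle vertex `d` of the short petal `P i` sees exactly `c i` and `c (i + 1)`, which are
adjacent. Walk from `c (i + 1)` back to `c i` around the other two petals, replacing a petal by
its center edge whenever its two centers are adjacent: the result is a path whose only chord
joins its ends, so together with `d` it closes a building unless it consists of two center
edges. Hence the centers form a triangle. Then a petal `P j` of length at least three, together
with the apex `c (j + 2)`, would again close a building; so all petals have length two and the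
sunflower is a 3-sun. -/

variable {G : SimpleGraph V}

lemma ZMod.three_cases (i j : ZMod 3) : j = i ∨ j = i + 1 ∨ j = i + 1 + 1 := by
  revert i j; decide

lemma ZMod.three_eq_add_one_or_eq_add_one {m n : ZMod 3} (h : m ≠ n) :
    n = m + 1 ∨ m = n + 1 := by
  revert m n; decide

lemma ZMod.three_eq_of_consecutive_pairs {a b m n : ZMod 3} (hab : a ≠ b)
    (hma : m = a ∨ m = a + 1) (hmb : m = b ∨ m = b + 1)
    (hna : n = a ∨ n = a + 1) (hnb : n = b ∨ n = b + 1) : m = n := by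
  revert a b m n; decide

lemma ZMod.three_add_one_add_one_add_one (i : ZMod 3) : i + 1 + 1 + 1 = i := by
  revert i; decide

lemma ZMod.three_add_one_add_one_ne (i : ZMod 3) : i + 1 + 1 ≠ i := by
  revert i; decide

namespace SimpleGraph.Walk

lemma IsPath.append_of_mem_support {u v w : V} {p : G.Walk u v} {q : G.Walk v w}
    (hp : p.IsPath) (hq : q.IsPath) (h : ∀ x ∈ p.support, x ∈ q.support → x = v) :
    (p.append q).IsPath := by
  rw [isPath_def, support_append, List.nodup_append]
  refine ⟨hp.support_nodup, hq.support_nodup.sublist q.support.tail_sublist, ?_⟩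
  have hq' := hq.support_nodup
  rw [← q.cons_tail_support, List.nodup_cons] at hq'
  rintro x hxp _ hxq rfl
  exact hq'.1 (h x hxp (List.mem_of_mem_tail hxq) ▸ hxq)

lemma support_eq_of_length_eq_two {u v : V} (p : G.Walk u v) (hp : p.length = 2) :
    p.support = [u, p.snd, v] := by
  rcases p with _ | ⟨_, _ | ⟨_, _ | _⟩⟩ <;> simp_all

lemma adj_snd_of_length_eq_two {u v : V} (p : G.Walk u v) (hp : p.length = 2) :
    G.Adj p.snd v := by
  rcases p with _ | ⟨_, _ | ⟨_, _ | _⟩⟩ <;> simp_all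

lemma getVert_val_add_one {v : V} (c : G.Walk v v) [NeZero c.length] (a : ZMod c.length) :
    c.getVert (a + 1).val = c.getVert (a.val + 1) := by
  have hval : (a + 1).val = (a.val + 1) % c.length := by
    rw [← ZMod.val_natCast, Nat.cast_add, ZMod.natCast_zmod_val, Nat.cast_one]
  rcases (show a.val + 1 ≤ c.length from a.val_lt).lt_or_eq with h | h
  · rw [hval, Nat.mod_eq_of_lt h]
  · rw [hval, h, Nat.mod_self, getVert_zero, getVert_length]

lemma IsCycle.injective_getVert_val {v : V} {c : G.Walk v v} (hc : c.IsCycle) :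
    Function.Injective fun a : ZMod c.length => c.getVert a.val := by
  have : NeZero c.length := ⟨by have := hc.three_le_length; omega⟩
  intro a b hab
  refine ZMod.val_injective _ (hc.getVert_injOn' ?_ ?_ hab) <;>
    simp only [Set.mem_ofPred_eq] <;> have := a.val_lt <;> have := b.val_lt <;> omega

lemma IsCycle.mk_getVert_val_mem_edges_iff {v : V} {c : G.Walk v v} (hc : c.IsCycle)
    (a b : ZMod c.length) :
    s(c.getVert a.val, c.getVert b.val) ∈ c.edges ↔ b = a + 1 ∨ a = b + 1 := by
  have : NeZero c.length := ⟨by have := hc.three_le_length; omega⟩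
  have hedge (a : ZMod c.length) : s(c.getVert a.val, c.getVert (a + 1).val) ∈ c.edges := by
    rw [getVert_val_add_one, mk_mem_edges_iff_exists]
    exact ⟨a.val, a.val_lt, rfl⟩
  constructor
  · rw [mk_mem_edges_iff_exists]
    rintro ⟨i, hi, he⟩
    have hi' : ((i : ZMod c.length)).val = i := ZMod.val_cast_of_lt hi
    rw [← hi', ← getVert_val_add_one, Sym2.eq_iff] at he
    have hinj := hc.injective_getVert_val
    rcases he with ⟨h₁, h₂⟩ | ⟨h₁, h₂⟩
    · exact .inl ((hinj h₂).symm.trans (congrArg (· + 1) (hinj h₁)))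
    · exact .inr ((hinj h₂).symm.trans (congrArg (· + 1) (hinj h₁)))
  · rintro (rfl | rfl)
    · exact hedge a
    · exact Sym2.eq_swap ▸ hedge b

end SimpleGraph.Walk

lemma hasBuilding_of_isCycle {v : V} {c : G.Walk v v} (hc : c.IsCycle) (hlen : 5 ≤ c.length)
    (hchord : G.Adj (c.getVert 0) (c.getVert 2))
    (hclosed : ∀ x ∈ c.support, ∀ y ∈ c.support, G.Adj x y →
      s(x, y) ∈ c.edges ∨ s(x, y) = s(c.getVert 0, c.getVert 2)) :
    HasBuilding G := by
  have : NeZero c.length := ⟨by omega⟩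
  set f : ZMod c.length → V := fun a => c.getVert a.val
  have hf : Function.Injective f := hc.injective_getVert_val
  have hf0 : c.getVert 0 = f 0 := by simp [f]
  have hf2 : c.getVert 2 = f 2 := by simp [f, ZMod.val_ofNat_of_lt (show 2 < c.length by omega)]
  rw [hf0, hf2] at hchord hclosed
  have hchord_iff (a b : ZMod c.length) :
      s(f a, f b) = s(f 0, f 2) ↔ a = 0 ∧ b = 2 ∨ a = 2 ∧ b = 0 := by
    simp only [Sym2.eq_iff, hf.eq_iff]
  have hadj (a b : ZMod c.length) :
      G.Adj (f a) (f b) ↔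
        (b = a + 1 ∨ a = b + 1) ∨ (a = 0 ∧ b = 2 ∨ a = 2 ∧ b = 0) := by
    rw [← hchord_iff, ← hc.mk_getVert_val_mem_edges_iff]
    refine ⟨hclosed _ (c.getVert_mem_support _) _ (c.getVert_mem_support _), ?_⟩
    rintro (h | h)
    · exact c.adj_of_mem_edges h
    · rcases (hchord_iff a b).1 h with ⟨rfl, rfl⟩ | ⟨rfl, rfl⟩
      exacts [hchord, hchord.symm]
  refine ⟨c.length, hlen, ⟨⟨⟨f, hf⟩, fun {a b} => ?_⟩⟩⟩
  change G.Adj (f a) (f b) ↔ _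
  rw [hadj, buildingGraph, fromRel_adj]
  constructor
  · intro h
    exact ⟨fun hab => G.irrefl ((hadj b b).2 (hab ▸ h)), by tauto⟩
  · tauto

lemma hasBuilding_of_apex {u w d : V} {p : G.Walk u w} (hp : p.IsPath) (hlen : 3 ≤ p.length)
    (hd : d ∉ p.support) (hdu : G.Adj d u) (hdw : G.Adj d w) (huw : G.Adj u w)
    (hdp : ∀ x ∈ p.support, G.Adj d x → x = u ∨ x = w)
    (hclosed : ∀ x ∈ p.support, ∀ y ∈ p.support, G.Adj x y →
      s(x, y) ∈ p.edges ∨ s(x, y) = s(u, w)) :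
    HasBuilding G := by
  have hd_edges (y : V) : s(d, y) ∉ p.edges := fun h => hd (p.fst_mem_support_of_mem_edges h)
  have hc : (Walk.cons hdw.symm (Walk.cons hdu p)).IsCycle := by
    rw [Walk.cons_isCycle_iff, Walk.cons_isPath_iff, Walk.edges_cons, List.mem_cons, Sym2.eq_swap]
    refine ⟨⟨hp, hd⟩, ?_⟩
    rintro (h | h)
    · exact huw.ne (Sym2.congr_right.1 h).symm
    · exact hd_edges w h
  refine hasBuilding_of_isCycle hc (by simp; omega) (by simpa using huw.symm) ?_
  simp only [Walk.support_cons, Walk.edges_cons, List.mem_cons, Walk.getVert_zero,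
    Walk.getVert_cons_succ]
  have hverts (x : V) (hx : x = w ∨ x = d ∨ x ∈ p.support) : x = d ∨ x ∈ p.support := by
    rcases hx with rfl | hx | hx
    exacts [.inr p.end_mem_support, .inl hx, .inr hx]
  intro x hx y hy hxy
  rcases hverts x hx with rfl | hxp <;> rcases hverts y hy with rfl | hyp
  · exact absurd hxy G.irrefl
  · rcases hdp y hyp hxy with rfl | rfl <;> simp [Sym2.eq_swap]
  · rcases hdp x hxp hxy.symm with rfl | rfl <;> simp [Sym2.eq_swap]
  · rcases hclosed x hxp y hyp hxy with h | h
    · exact .inl (.inr (.inr h))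
    · exact .inr (h.trans Sym2.eq_swap)

namespace Sunflower

section

variable {k : ℕ} (S : Sunflower G k)

def verts : Set V := {v | ∃ a, v ∈ (S.P a).support}

lemma c_mem_verts (a : ZMod k) : S.c a ∈ S.verts := ⟨a, (S.P a).start_mem_support⟩

lemma c_mem_support_iff {m a : ZMod k} : S.c m ∈ (S.P a).support ↔ m = a ∨ m = a + 1 := by
  constructor
  · intro h
    by_cases hma : m = a
    · exact .inl hma
    · exact (S.hmeet a m (Ne.symm hma) _ h (S.P m).start_mem_support).imp
        (fun h => S.hinj h) (fun h => S.hinj h)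
  · rintro (rfl | rfl)
    exacts [(S.P m).start_mem_support, (S.P a).end_mem_support]

lemma exists_c_of_mem_support_of_mem_support {a b : ZMod k} (hab : a ≠ b) {x : V}
    (ha : x ∈ (S.P a).support) (hb : x ∈ (S.P b).support) :
    ∃ m, x = S.c m ∧ (m = a ∨ m = a + 1) ∧ (m = b ∨ m = b + 1) := by
  rcases S.hmeet a b hab x ha hb with rfl | rfl
  · exact ⟨a, rfl, .inl rfl, S.c_mem_support_iff.1 hb⟩
  · exact ⟨a + 1, rfl, .inr rfl, S.c_mem_support_iff.1 hb⟩

lemma eq_of_mem_support_of_ne_c {a b : ZMod k} {x : V} (ha : x ∈ (S.P a).support)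
    (hxa : x ≠ S.c a) (hxa' : x ≠ S.c (a + 1)) (hb : x ∈ (S.P b).support) : b = a := by
  by_contra hba
  exact (S.hmeet a b (Ne.symm hba) x ha hb).elim hxa hxa'

lemma support_P_of_length_eq_two {a : ZMod k} (h2 : (S.P a).length = 2) :
    (S.P a).support = [S.c a, (S.P a).snd, S.c (a + 1)] :=
  Walk.support_eq_of_length_eq_two _ h2

lemma snd_ne_c {a : ZMod k} (h2 : (S.P a).length = 2) (m : ZMod k) : (S.P a).snd ≠ S.c m := by
  have hnd := (S.hpath a).support_nodup
  rw [S.support_P_of_length_eq_two h2] at hnd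
  simp only [List.nodup_cons, List.mem_cons, List.not_mem_nil, or_false, not_or] at hnd
  obtain ⟨⟨hne₀, -⟩, hne₁, -⟩ := hnd
  intro hm
  have hmem : S.c m ∈ (S.P a).support := hm ▸ (S.P a).getVert_mem_support 1
  rcases S.c_mem_support_iff.1 hmem with rfl | rfl
  exacts [hne₀ hm.symm, hne₁ hm]

lemma eq_of_snd_mem_support {a b : ZMod k} (h2 : (S.P a).length = 2)
    (hb : (S.P a).snd ∈ (S.P b).support) : b = a :=
  S.eq_of_mem_support_of_ne_c ((S.P a).getVert_mem_support 1) (S.snd_ne_c h2 a)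
    (S.snd_ne_c h2 (a + 1)) hb

open Classical in
noncomputable def shortcut (a : ZMod k) : G.Walk (S.c a) (S.c (a + 1)) :=
  if h : G.Adj (S.c a) (S.c (a + 1)) then h.toWalk else S.P a

lemma shortcut_of_adj {a : ZMod k} (h : G.Adj (S.c a) (S.c (a + 1))) :
    S.shortcut a = h.toWalk := dif_pos h

lemma shortcut_of_not_adj {a : ZMod k} (h : ¬ G.Adj (S.c a) (S.c (a + 1))) :
    S.shortcut a = S.P a := dif_neg h

lemma isPath_shortcut (a : ZMod k) : (S.shortcut a).IsPath := by
  by_cases h : G.Adj (S.c a) (S.c (a + 1))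
  · rw [S.shortcut_of_adj h]; exact h.isPath_toWalk
  · rw [S.shortcut_of_not_adj h]; exact S.hpath a

lemma one_le_length_shortcut (a : ZMod k) : 1 ≤ (S.shortcut a).length := by
  by_cases h : G.Adj (S.c a) (S.c (a + 1))
  · rw [S.shortcut_of_adj h, h.length_toWalk]
  · rw [S.shortcut_of_not_adj h]; exact le_trans (by norm_num) (S.hlen a)

lemma two_le_length_shortcut {a : ZMod k} (h : ¬ G.Adj (S.c a) (S.c (a + 1))) :
    2 ≤ (S.shortcut a).length := by
  rw [S.shortcut_of_not_adj h]; exact S.hlen a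

lemma mem_support_P_of_mem_support_shortcut {a : ZMod k} {x : V}
    (hx : x ∈ (S.shortcut a).support) : x ∈ (S.P a).support := by
  by_cases h : G.Adj (S.c a) (S.c (a + 1))
  · rw [S.shortcut_of_adj h, h.support_toWalk, List.mem_pair] at hx
    rcases hx with rfl | rfl
    exacts [(S.P a).start_mem_support, (S.P a).end_mem_support]
  · rwa [S.shortcut_of_not_adj h] at hx

lemma mem_support_shortcut_of_mem_support_P {a b : ZMod k} {x : V}
    (ha : x ∈ (S.P a).support) (hb : x ∈ (S.shortcut b).support) :
    x ∈ (S.shortcut a).support := by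
  by_cases hab : b = a
  · exact hab ▸ hb
  · rcases S.hmeet a b (Ne.symm hab) x ha (S.mem_support_P_of_mem_support_shortcut hb)
      with rfl | rfl
    exacts [(S.shortcut a).start_mem_support, (S.shortcut a).end_mem_support]

end

variable (S : Sunflower G 3)

lemma exists_P_of_adj {x y : V} (hx : x ∈ S.verts) (hy : y ∈ S.verts) (hxy : G.Adj x y) :
    ∃ a, x ∈ (S.P a).support ∧ y ∈ (S.P a).support := by
  rcases S.hind x y hx hy hxy with ⟨a, he⟩ | ⟨⟨m, rfl⟩, ⟨n, rfl⟩⟩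
  · exact ⟨a, (S.P a).fst_mem_support_of_mem_edges he, (S.P a).snd_mem_support_of_mem_edges he⟩
  · have hmn : m ≠ n := fun h => hxy.ne (congrArg S.c h)
    rcases ZMod.three_eq_add_one_or_eq_add_one hmn with rfl | rfl
    · exact ⟨m, (S.P m).start_mem_support, (S.P m).end_mem_support⟩
    · exact ⟨n, (S.P n).end_mem_support, (S.P n).start_mem_support⟩

lemma eq_of_mem_support_inter {a b : ZMod 3} (hab : a ≠ b) {x y : V}
    (hxa : x ∈ (S.P a).support) (hxb : x ∈ (S.P b).support)
    (hya : y ∈ (S.P a).support) (hyb : y ∈ (S.P b).support) : x = y := by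
  obtain ⟨m, rfl, hma, hmb⟩ := S.exists_c_of_mem_support_of_mem_support hab hxa hxb
  obtain ⟨n, rfl, hna, hnb⟩ := S.exists_c_of_mem_support_of_mem_support hab hya hyb
  exact congrArg S.c (ZMod.three_eq_of_consecutive_pairs hab hma hmb hna hnb)

lemma eq_c_succ_of_mem_support {a : ZMod 3} {x : V} (ha : x ∈ (S.P a).support)
    (ha' : x ∈ (S.P (a + 1)).support) : x = S.c (a + 1) :=
  S.eq_of_mem_support_inter (by simp) ha ha' (S.P a).end_mem_support
    (S.P (a + 1)).start_mem_support

lemma eq_c_of_adj_snd {a : ZMod 3} (h2 : (S.P a).length = 2) {x : V} (hx : x ∈ S.verts)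
    (hadj : G.Adj (S.P a).snd x) : x = S.c a ∨ x = S.c (a + 1) := by
  obtain ⟨b, hb, hxb⟩ := S.exists_P_of_adj ⟨a, (S.P a).getVert_mem_support 1⟩ hx hadj
  rw [S.eq_of_snd_mem_support h2 hb, S.support_P_of_length_eq_two h2] at hxb
  simp only [List.mem_cons, List.not_mem_nil, or_false] at hxb
  rcases hxb with h | h | h
  exacts [.inl h, absurd h.symm hadj.ne, .inr h]

lemma mem_edges_or_eq_of_adj {a : ZMod 3} {x y : V} (hx : x ∈ (S.P a).support)
    (hy : y ∈ (S.P a).support) (hxy : G.Adj x y) :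
    s(x, y) ∈ (S.P a).edges ∨ s(x, y) = s(S.c a, S.c (a + 1)) := by
  rcases S.hind x y ⟨a, hx⟩ ⟨a, hy⟩ hxy with ⟨b, he⟩ | ⟨⟨m, rfl⟩, ⟨n, rfl⟩⟩
  · by_cases hba : b = a
    · exact .inl (hba ▸ he)
    · exact absurd (S.eq_of_mem_support_inter hba ((S.P b).fst_mem_support_of_mem_edges he) hx
        ((S.P b).snd_mem_support_of_mem_edges he) hy) hxy.ne
  · have hmn : m ≠ n := fun h => hxy.ne (congrArg S.c h)
    right
    rcases S.c_mem_support_iff.1 hx with rfl | rfl <;>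
      rcases S.c_mem_support_iff.1 hy with h | h <;> subst h
    exacts [absurd rfl hmn, rfl, Sym2.eq_swap, absurd rfl hmn]

lemma isChordless_shortcut (a : ZMod 3) : (S.shortcut a).IsChordless := by
  by_cases h : G.Adj (S.c a) (S.c (a + 1))
  · rw [S.shortcut_of_adj h]; exact h.isChordless_toWalk
  · rw [S.shortcut_of_not_adj h, Walk.isChordless_iff_forall_mem_edges]
    intro x y hx hy hxy
    refine (S.mem_edges_or_eq_of_adj hx hy hxy).resolve_right fun he => h ?_
    rw [← G.mem_edgeSet, ← he]
    exact hxy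

noncomputable def detour (i : ZMod 3) : G.Walk (S.c (i + 1)) (S.c i) :=
  (S.shortcut (i + 1)).append
    ((S.shortcut (i + 1 + 1)).copy rfl (congrArg S.c (ZMod.three_add_one_add_one_add_one i)))

lemma length_detour (i : ZMod 3) :
    (S.detour i).length = (S.shortcut (i + 1)).length + (S.shortcut (i + 1 + 1)).length := by
  simp [detour]

lemma exists_of_mem_support_detour {i : ZMod 3} {x : V} (hx : x ∈ (S.detour i).support) :
    ∃ b ≠ i, x ∈ (S.shortcut b).support := by
  rcases (Walk.mem_support_append_iff _ _).1 hx with hx | hx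
  · exact ⟨i + 1, by simp, hx⟩
  · exact ⟨i + 1 + 1, ZMod.three_add_one_add_one_ne i, by simpa using hx⟩

lemma mem_verts_of_mem_support_detour {i : ZMod 3} {x : V} (hx : x ∈ (S.detour i).support) :
    x ∈ S.verts :=
  let ⟨b, _, hxb⟩ := S.exists_of_mem_support_detour hx
  ⟨b, S.mem_support_P_of_mem_support_shortcut hxb⟩

lemma isPath_detour (i : ZMod 3) : (S.detour i).IsPath :=
  (S.isPath_shortcut _).append_of_mem_support ((Walk.isPath_copy _ _ _).2 (S.isPath_shortcut _))
    fun _ hxA hxB => S.eq_c_succ_of_mem_support (S.mem_support_P_of_mem_support_shortcut hxA)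
      (S.mem_support_P_of_mem_support_shortcut (by simpa using hxB))

lemma mem_edges_detour_or_eq_of_adj {i : ZMod 3} (hadj : G.Adj (S.c i) (S.c (i + 1)))
    {x y : V} (hx : x ∈ (S.detour i).support) (hy : y ∈ (S.detour i).support)
    (hxy : G.Adj x y) : s(x, y) ∈ (S.detour i).edges ∨ s(x, y) = s(S.c (i + 1), S.c i) := by
  obtain ⟨a, hxa, hya⟩ := S.exists_P_of_adj (S.mem_verts_of_mem_support_detour hx)
    (S.mem_verts_of_mem_support_detour hy) hxy
  obtain ⟨b, -, hxb⟩ := S.exists_of_mem_support_detour hx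
  obtain ⟨b', -, hyb'⟩ := S.exists_of_mem_support_detour hy
  have he := (S.isChordless_shortcut a).mem_edges
    (S.mem_support_shortcut_of_mem_support_P hxa hxb)
    (S.mem_support_shortcut_of_mem_support_P hya hyb') hxy
  rcases ZMod.three_cases i a with rfl | rfl | rfl
  · rw [S.shortcut_of_adj hadj, hadj.edges_toWalk, List.mem_singleton] at he
    exact .inr (he.trans Sym2.eq_swap)
  · exact .inl (Walk.edges_append _ _ ▸ List.mem_append_left _ he)
  · exact .inl (Walk.edges_append _ _ ▸ List.mem_append_right _ (by simpa using he))

theorem adj_c_succ (hBF : BuildingFree G) {i : ZMod 3} (h2 : (S.P i).length = 2)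
    (hadj : G.Adj (S.c i) (S.c (i + 1))) (j : ZMod 3) : G.Adj (S.c j) (S.c (j + 1)) := by
  have htriangle : G.Adj (S.c (i + 1)) (S.c (i + 1 + 1)) ∧
      G.Adj (S.c (i + 1 + 1)) (S.c (i + 1 + 1 + 1)) := by
    by_contra hcon
    have hlen : 3 ≤ (S.detour i).length := by
      have := S.one_le_length_shortcut (i + 1)
      have := S.one_le_length_shortcut (i + 1 + 1)
      rw [length_detour]
      rcases not_and_or.1 hcon with h | h <;> have := S.two_le_length_shortcut h <;> omega
    have hd : (S.P i).snd ∉ (S.detour i).support := fun hd =>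
      let ⟨b, hbi, hdb⟩ := S.exists_of_mem_support_detour hd
      hbi (S.eq_of_snd_mem_support h2 (S.mem_support_P_of_mem_support_shortcut hdb))
    exact hBF (hasBuilding_of_apex (S.isPath_detour i) hlen hd
      ((S.P i).adj_snd_of_length_eq_two h2)
      ((S.P i).adj_snd (by simp [← Walk.length_eq_zero_iff, h2])).symm hadj.symm
      (fun x hx hdx => (S.eq_c_of_adj_snd h2 (S.mem_verts_of_mem_support_detour hx) hdx).symm)
      fun x hx y hy => S.mem_edges_detour_or_eq_of_adj hadj hx hy)
  rcases ZMod.three_cases i j with rfl | rfl | rfl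
  exacts [hadj, htriangle.1, htriangle.2]

theorem length_P_eq_two (hBF : BuildingFree G) (hc : ∀ j, G.Adj (S.c j) (S.c (j + 1)))
    (j : ZMod 3) : (S.P j).length = 2 := by
  by_contra hne
  have hapex : S.c (j + 1 + 1) ∉ (S.P j).support := by
    simp [S.c_mem_support_iff, ZMod.three_add_one_add_one_ne j]
  refine hBF (hasBuilding_of_apex (S.hpath j) (by have := S.hlen j; omega) hapex
    (by simpa [ZMod.three_add_one_add_one_add_one] using hc (j + 1 + 1)) (hc (j + 1)).symm (hc j)
    ?_ fun x hx y hy hxy => S.mem_edges_or_eq_of_adj hx hy hxy)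
  intro x hx hadj
  obtain ⟨a, ha, hxa⟩ := S.exists_P_of_adj (S.c_mem_verts _) ⟨j, hx⟩ hadj
  exact S.hmeet j a (by rintro rfl; exact hapex ha) x hx hxa

lemma adj_c_iff (hc : ∀ j, G.Adj (S.c j) (S.c (j + 1))) (a b : ZMod 3) :
    G.Adj (S.c a) (S.c b) ↔ a ≠ b := by
  refine ⟨fun h hab => h.ne (congrArg S.c hab), fun hab => ?_⟩
  rcases ZMod.three_eq_add_one_or_eq_add_one hab with rfl | rfl
  exacts [hc a, (hc b).symm]

lemma adj_c_snd_iff {b : ZMod 3} (h2 : (S.P b).length = 2) (a : ZMod 3) :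
    G.Adj (S.c a) (S.P b).snd ↔ a = b ∨ a = b + 1 := by
  refine ⟨fun h => ?_, ?_⟩
  · obtain ⟨m, ham, hbm⟩ :=
      S.exists_P_of_adj (S.c_mem_verts a) ⟨b, (S.P b).getVert_mem_support 1⟩ h
    rw [S.eq_of_snd_mem_support h2 hbm] at ham
    exact S.c_mem_support_iff.1 ham
  · rintro (rfl | rfl)
    · exact (S.P a).adj_snd (by simp [← Walk.length_eq_zero_iff, h2])
    · exact ((S.P b).adj_snd_of_length_eq_two h2).symm

lemma not_adj_snd_snd {a b : ZMod 3} (ha : (S.P a).length = 2) (hb : (S.P b).length = 2) :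
    ¬ G.Adj (S.P a).snd (S.P b).snd := by
  intro h
  obtain ⟨m, ham, hbm⟩ := S.exists_P_of_adj ⟨a, (S.P a).getVert_mem_support 1⟩
    ⟨b, (S.P b).getVert_mem_support 1⟩ h
  rw [S.eq_of_snd_mem_support ha ham] at hbm
  exact h.ne (congrArg (fun m => (S.P m).snd) (S.eq_of_snd_mem_support hb hbm))

theorem exists_sunGraph_embedding (hc : ∀ j, G.Adj (S.c j) (S.c (j + 1)))
    (hlen : ∀ j, (S.P j).length = 2) :
    ∃ f : sunGraph 3 ↪g G, Set.range f = S.verts := by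
  let f : ZMod 3 ⊕ ZMod 3 → V := Sum.elim S.c fun a => (S.P a).snd
  have hf : Function.Injective f := by
    rintro (a | a) (b | b) h <;> simp only [f, Sum.elim_inl, Sum.elim_inr] at h
    · rw [S.hinj h]
    · exact absurd h.symm (S.snd_ne_c (hlen b) a)
    · exact absurd h (S.snd_ne_c (hlen a) b)
    · have hb : (S.P b).snd ∈ (S.P a).support := h ▸ (S.P a).getVert_mem_support 1
      rw [S.eq_of_snd_mem_support (hlen b) hb]
  refine ⟨⟨⟨f, hf⟩, fun {x y} => ?_⟩, ?_⟩
  · change G.Adj (f x) (f y) ↔ _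
    rcases x with a | a <;> rcases y with b | b <;>
      simp [f, sunGraph, S.adj_c_iff hc, S.adj_c_snd_iff (hlen _),
        S.not_adj_snd_snd (hlen _) (hlen _), G.adj_comm (S.P a).snd]
  · ext v
    constructor
    · rintro ⟨a | a, rfl⟩
      exacts [S.c_mem_verts a, ⟨a, (S.P a).getVert_mem_support 1⟩]
    · rintro ⟨a, ha⟩
      rw [S.support_P_of_length_eq_two (hlen a)] at ha
      simp only [List.mem_cons, List.not_mem_nil, or_false] at ha
      rcases ha with rfl | rfl | rfl
      exacts [⟨.inl a, rfl⟩, ⟨.inr a, rfl⟩, ⟨.inl (a + 1), rfl⟩]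

end Sunflower

theorem minimal_sunflower_is_3sun_general (G : SimpleGraph V) (hBF : BuildingFree G)
    (S : Sunflower G 3) (i : ZMod 3)
    (h2 : (S.P i).length = 2) (hadj : G.Adj (S.c i) (S.c (i + 1))) :
    ∃ f : sunGraph 3 ↪g G, Set.range f = {v | ∃ a, v ∈ (S.P a).support} := by
  have hc := S.adj_c_succ hBF h2 hadj
  exact S.exists_sunGraph_embedding hc (S.length_P_eq_two hBF hc)

/-- a vertex-minimal sunflower with exactly 3 centers in a building-free
graph, having a petal with exactly two edges whose petal vertex is simplicial in the
sunflower, is a 3-sun (its vertex set induces a 3-sun). -/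
theorem minimal_sunflower_is_3sun (G : SimpleGraph V) (hBF : BuildingFree G)
    (S : Sunflower G 3) (i : ZMod 3)
    (h2 : (S.P i).length = 2) (hadj : G.Adj (S.c i) (S.c (i + 1)))
    (hmin : ∀ (T : Sunflower G 3) (j : ZMod 3), (T.P j).length = 2 →
      G.Adj (T.c j) (T.c (j + 1)) →
      {v | ∃ a, v ∈ (S.P a).support}.ncard ≤ {v | ∃ a, v ∈ (T.P a).support}.ncard) :
    ∃ f : sunGraph 3 ↪g G, Set.range f = {v | ∃ a, v ∈ (S.P a).support} :=
  minimal_sunflower_is_3sun_general G hBF S i h2 hadj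
end

section
/- Let G be a strongly chordal graph with strong elimination ordering S = v_1, v_2, ..., v_n. Let G' be obtained from G by adding every edge v_i v_j (i < j) such that for some k with j < k, v_i v_k v_j is an induced path P_3 in G (v_i and v_j both adjacent to v_k, v_i v_j not an edge). Then G' is chordal and S is a perfect elimination ordering for G'. -/
/-!
Write `G'` for `G` together with the added `P₃`-edges. If `x` is earlier than `u` and
`xu ∈ G'`, then `u` lies in the closed neighbourhood of some `w ∈ N(x)` with `f u ≤ f w`
(either `w = u`, or `w` is the apex of the `P₃` that created `xu`). Given two such
later `G'`-neighbours `u, v` of `x` with witnesses `f w ≤ f w'`, the strong elimination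
condition at `x` gives `N[w] ⊆ N[w']`, so `u` and `v` both lie in `N[w']` and are no
later than `w'`: they are adjacent in `G`, or `w'` is the apex of a `P₃` making them
adjacent in `G'`. Hence the ordering is a perfect elimination ordering of `G'`, and the
earliest vertex of an induced cycle of length at least four would have its two
non-adjacent cycle neighbours in a clique.
-/

open SimpleGraph

universe u

variable {V : Type u}

lemma ZMod.natCast_ne_zero_of_pos_of_lt {k c : ℕ} (hc : 0 < c) (hck : c < k) :
    (c : ZMod k) ≠ 0 := fun h =>
  hc.ne' (Nat.eq_zero_of_dvd_of_lt ((ZMod.natCast_eq_zero_iff c k).mp h) hck)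

namespace SimpleGraph

section P3Completion

variable (G : SimpleGraph V) (f : V → ℕ)

def p3Completion : SimpleGraph V :=
  G ⊔ SimpleGraph.fromRel (fun i j => f i < f j ∧ ¬ G.Adj i j ∧
    ∃ k, f j < f k ∧ G.Adj i k ∧ G.Adj j k)

variable {G f}

lemma p3Completion_adj_of_mem_cN (hf : Function.Injective f) {s : Set V} {u v w : V}
    (huv : u ≠ v) (hu : u ∈ cN G s w) (hv : v ∈ cN G s w) (hfu : f u ≤ f w)
    (hfv : f v ≤ f w) : (p3Completion G f).Adj u v := by
  rcases hu.2 with rfl | hwu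
  · rcases hv.2 with rfl | hwv
    · exact absurd rfl huv
    · exact Or.inl hwv
  rcases hv.2 with rfl | hwv
  · exact Or.inl hwu.symm
  by_cases hG : G.Adj u v
  · exact Or.inl hG
  have hfuw : f u < f w := hfu.lt_of_ne fun h => hwu.ne (hf h).symm
  have hfvw : f v < f w := hfv.lt_of_ne fun h => hwv.ne (hf h).symm
  refine Or.inr ⟨huv, ?_⟩
  rcases (hf.ne huv).lt_or_gt with h | h
  · exact Or.inl ⟨h, hG, w, hfvw, hwu.symm, hwv.symm⟩
  · exact Or.inr ⟨h, fun h' => hG h'.symm, w, hfuw, hwv.symm, hwu.symm⟩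

lemma exists_witness_of_p3Completion_adj {x u : V} (hxu : f x < f u)
    (h : (p3Completion G f).Adj x u) :
    ∃ w, G.Adj x w ∧ f u ≤ f w ∧ u ∈ cN G {y | f x ≤ f y} w := by
  rcases h with h | ⟨-, ⟨-, -, w, hw, hxw, huw⟩ | ⟨h, -⟩⟩
  · exact ⟨u, h, le_rfl, hxu.le, Or.inl rfl⟩
  · exact ⟨w, hxw, hw.le, hxu.le, Or.inr huw.symm⟩
  · exact absurd hxu (not_lt.mpr h.le)

variable (hf : Function.Injective f)
  (hstrong : ∀ i j k : V, f i < f j → f j < f k → G.Adj i j → G.Adj i k →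
    cN G {u | f i ≤ f u} j ⊆ cN G {u | f i ≤ f u} k)
include hf hstrong

lemma p3Completion_adj_of_witness_le {x u v w w' : V} (huv : u ≠ v) (hxu : f x < f u)
    (hxw : G.Adj x w) (hfw : f u ≤ f w) (hw : u ∈ cN G {y | f x ≤ f y} w)
    (hxw' : G.Adj x w') (hfw' : f v ≤ f w') (hw' : v ∈ cN G {y | f x ≤ f y} w')
    (hww' : f w ≤ f w') : (p3Completion G f).Adj u v := by
  have hu' : u ∈ cN G {y | f x ≤ f y} w' := by
    rcases hww'.lt_or_eq with h | h
    · exact hstrong x w w' (hxu.trans_le hfw) h hxw hxw' hw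
    · exact hf h ▸ hw
  exact p3Completion_adj_of_mem_cN hf huv hu' hw' (hfw.trans hww') hfw'

theorem isClique_upperNeighbors_p3Completion (x : V) :
    (p3Completion G f).IsClique {u | f x < f u ∧ (p3Completion G f).Adj x u} := by
  intro u ⟨hxu, hu⟩ v ⟨hxv, hv⟩ huv
  obtain ⟨w, hxw, hfw, hw⟩ := exists_witness_of_p3Completion_adj hxu hu
  obtain ⟨w', hxw', hfw', hw'⟩ := exists_witness_of_p3Completion_adj hxv hv
  rcases le_total (f w) (f w') with h | h
  · exact p3Completion_adj_of_witness_le hf hstrong huv hxu hxw hfw hw hxw' hfw' hw' h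
  · exact (p3Completion_adj_of_witness_le hf hstrong huv.symm hxv hxw' hfw' hw' hxw hfw hw h).symm

end P3Completion

lemma cyc_adj_add_one {k : ℕ} (hk : 1 < k) (i : ZMod k) : (cyc k).Adj i (i + 1) := by
  refine (fromRel_adj _ _ _).mpr ⟨fun h => ?_, Or.inl rfl⟩
  exact ZMod.natCast_ne_zero_of_pos_of_lt (k := k) (c := 1) one_pos hk
    (by exact_mod_cast (by linear_combination -h : (1 : ZMod k) = 0))

lemma cyc_not_adj_sub_one_add_one {k : ℕ} (hk : 3 < k) (i : ZMod k) :
    ¬ (cyc k).Adj (i - 1) (i + 1) := by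
  rintro ⟨-, h | h⟩
  · exact ZMod.natCast_ne_zero_of_pos_of_lt (k := k) (c := 1) one_pos (by omega)
      (by exact_mod_cast (by linear_combination h : (1 : ZMod k) = 0))
  · exact ZMod.natCast_ne_zero_of_pos_of_lt (k := k) (c := 3) three_pos hk
      (by exact_mod_cast (by linear_combination -h : (3 : ZMod k) = 0))

lemma cyc_sub_one_ne_add_one {k : ℕ} (hk : 2 < k) (i : ZMod k) : i - 1 ≠ i + 1 := fun h =>
  ZMod.natCast_ne_zero_of_pos_of_lt (k := k) (c := 2) two_pos hk
    (by exact_mod_cast (by linear_combination -h : (2 : ZMod k) = 0))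

theorem isChordal_of_isClique_upperNeighbors {H : SimpleGraph V} {f : V → ℕ}
    (hf : Function.Injective f) (h : ∀ x, H.IsClique {u | f x < f u ∧ H.Adj x u}) :
    IsChordal H := by
  intro k hk
  refine ⟨fun e => ?_⟩
  have : NeZero k := ⟨by omega⟩
  obtain ⟨i, hi⟩ := Finite.exists_min (f ∘ e)
  have hlt : ∀ j, (cyc k).Adj i j → f (e i) < f (e j) := fun j hj =>
    (hi j).lt_of_ne fun h => hj.ne (e.injective (hf h))
  have hprev : (cyc k).Adj i (i - 1) := by
    have h := (cyc_adj_add_one (k := k) (by omega) (i - 1)).symm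
    rwa [sub_add_cancel] at h
  have hnext : (cyc k).Adj i (i + 1) := cyc_adj_add_one (by omega) i
  have hadj : H.Adj (e (i - 1)) (e (i + 1)) :=
    h (e i) ⟨hlt _ hprev, e.map_adj_iff.mpr hprev⟩ ⟨hlt _ hnext, e.map_adj_iff.mpr hnext⟩
      (e.injective.ne (cyc_sub_one_ne_add_one (by omega) i))
  exact cyc_not_adj_sub_one_add_one (by omega) i (e.map_adj_iff.mp hadj)

end SimpleGraph

theorem scc_chordal_general (G : SimpleGraph V) (f : V ↪ ℕ)
    (hstrong : ∀ i j k : V, f i < f j → f j < f k → G.Adj i j → G.Adj i k →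
      cN G {u | f i ≤ f u} j ⊆ cN G {u | f i ≤ f u} k) :
    ∀ G' : SimpleGraph V,
      G' = G ⊔ SimpleGraph.fromRel (fun i j => f i < f j ∧ ¬ G.Adj i j ∧
        ∃ k, f j < f k ∧ G.Adj i k ∧ G.Adj j k) →
      IsChordal G' ∧ ∀ x : V, G'.IsClique {u | f x < f u ∧ G'.Adj x u} := by
  rintro G' rfl
  have hclique := isClique_upperNeighbors_p3Completion f.injective hstrong
  exact ⟨isChordal_of_isClique_upperNeighbors f.injective hclique, hclique⟩

/-- if `G` is strongly chordal with strong elimination ordering given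
by `f : V ↪ ℕ`, and `G'` is obtained by adding every edge `ij` (`f i < f j`) such
that `i, k, j` is a `P₃` for some `k` with `f j < f k`, then `G'` is chordal and
the same ordering is a perfect elimination ordering for `G'`. -/
theorem scc_chordal [Fintype V] (G : SimpleGraph V) (f : V ↪ ℕ)
    (hsimple : ∀ x : V, IsSimpleIn G {u | f x ≤ f u} x)
    (hstrong : ∀ i j k : V, f i < f j → f j < f k → G.Adj i j → G.Adj i k →
      cN G {u | f i ≤ f u} j ⊆ cN G {u | f i ≤ f u} k) :
    ∀ G' : SimpleGraph V,
      G' = G ⊔ SimpleGraph.fromRel (fun i j => f i < f j ∧ ¬ G.Adj i j ∧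
        ∃ k, f j < f k ∧ G.Adj i k ∧ G.Adj j k) →
      IsChordal G' ∧ ∀ x : V, G'.IsClique {u | f x < f u ∧ G'.Adj x u} :=
  scc_chordal_general G f hstrong
end

section
/- If a graph G contains a near building as an induced subgraph, then G contains an induced building or an induced gem. Equivalently, a (building, gem)-free graph contains no induced near building. -/
open SimpleGraph

universe u

variable {V : Type u}

/-- `G` contains a near building as an induced subgraph: vertices `v, w 0, ..., w (j-1)`
(`j ≥ 4`, all distinct), with edges `v-(w 0)`, `v-(w (j-1))`, `(w 0)-(w (j-1))`, the
path edges `(w i)-(w (i+1))`, and possibly extra edges only of the form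
`(w (j-1))-(w a)` with `1 ≤ a ≤ j-3`, and no other edges. -/
def HasNearBuilding (G : SimpleGraph V) : Prop :=
  ∃ (j : ℕ) (v : V) (w : ℕ → V), 4 ≤ j ∧
    (∀ a b, a < j → b < j → w a = w b → a = b) ∧
    (∀ a, a < j → v ≠ w a) ∧
    G.Adj v (w 0) ∧ G.Adj v (w (j - 1)) ∧ G.Adj (w 0) (w (j - 1)) ∧
    (∀ a, 0 < a → a < j - 1 → ¬ G.Adj v (w a)) ∧
    (∀ a, a + 1 < j → G.Adj (w a) (w (a + 1))) ∧
    (∀ a b, a < b → b < j → G.Adj (w a) (w b) →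
      b = a + 1 ∨ (a = 0 ∧ b = j - 1) ∨ (b = j - 1 ∧ 1 ≤ a ∧ a ≤ j - 3))

/-!
Take a near building `v, w 0, …, w (j-1)` with `j` minimal. If `w 1 ∼ w (j-1)`, then either
`j = 4` and `w 3` is the centre of a gem on the path `v, w 0, w 1, w 2`, or deleting `v` leaves a
near building on `j - 1` path vertices with apex `w 0`. If `w (j-1) ∼ w a` for some
`2 ≤ a ≤ j - 3`, then `v, w 0, …, w a, w (j-1)` is a near building on `a + 2` path vertices.
Otherwise `w (j-1)` has no extra edges and the near building is itself a building on `j + 1`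
vertices.
-/

theorem buildingGraph_adj_iff_of_val_lt {k : ℕ} (hk : 5 ≤ k) {x y : ZMod k}
    (hxy : x.val < y.val) :
    (buildingGraph k).Adj x y ↔
      y.val = x.val + 1 ∨ (x.val = 0 ∧ y.val = k - 1) ∨ (x.val = 0 ∧ y.val = 2) := by
  have : NeZero k := ⟨by omega⟩
  have : Fact (1 < k) := ⟨by omega⟩
  have hy := y.val_lt
  have hx1 : (x + 1).val = x.val + 1 := by
    rw [ZMod.val_add, ZMod.val_one]
    exact Nat.mod_eq_of_lt (by omega)
  have hy1 : (y + 1).val = if y.val + 1 = k then 0 else y.val + 1 := by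
    rw [ZMod.val_add, ZMod.val_one]
    split_ifs with h
    · simp [h]
    · exact Nat.mod_eq_of_lt (by omega)
  have h2 : (2 : ZMod k).val = 2 := ZMod.val_ofNat_of_lt (by show 2 < k; omega)
  simp only [buildingGraph, fromRel_adj, ne_eq, ← (ZMod.val_injective k).eq_iff, ZMod.val_zero,
    h2, hx1, hy1]
  split_ifs <;> omega

section

variable {G : SimpleGraph V}

theorem hasBuilding_of_adj_iff {k : ℕ} (hk : 5 ≤ k) (f : ℕ → V)
    (hf : ∀ a b, a < k → b < k → f a = f b → a = b)
    (hadj : ∀ a b, a < b → b < k →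
      (G.Adj (f a) (f b) ↔ b = a + 1 ∨ (a = 0 ∧ b = k - 1) ∨ (a = 0 ∧ b = 2))) :
    HasBuilding G := by
  have : NeZero k := ⟨by omega⟩
  refine ⟨k, hk, ⟨⟨⟨fun x => f x.val, fun x y hxy => ?_⟩, fun {x y} => ?_⟩⟩⟩
  · exact ZMod.val_injective k (hf _ _ x.val_lt y.val_lt hxy)
  · change G.Adj (f x.val) (f y.val) ↔ _
    rcases lt_trichotomy x.val y.val with h | h | h
    · exact (hadj _ _ h y.val_lt).trans (buildingGraph_adj_iff_of_val_lt hk h).symm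
    · obtain rfl := ZMod.val_injective k h
      simp
    · rw [G.adj_comm, (buildingGraph k).adj_comm]
      exact (hadj _ _ h x.val_lt).trans (buildingGraph_adj_iff_of_val_lt hk h).symm

theorem nonempty_gemGraph_embedding_of_adj {a b c d e : V} (hab : G.Adj a b) (hbc : G.Adj b c)
    (hcd : G.Adj c d) (hea : G.Adj e a) (heb : G.Adj e b) (hec : G.Adj e c) (hed : G.Adj e d)
    (hac : ¬ G.Adj a c) (had : ¬ G.Adj a d) (hbd : ¬ G.Adj b d)
    (hac' : a ≠ c) (had' : a ≠ d) (hbd' : b ≠ d) :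
    Nonempty (gemGraph ↪g G) := by
  have hinj : Function.Injective ![a, b, c, d, e] := by
    intro i j h
    fin_cases i <;> fin_cases j <;> simp_all
  refine ⟨⟨⟨![a, b, c, d, e], hinj⟩, fun {i j} => ?_⟩⟩
  fin_cases i <;> fin_cases j <;>
    simp [gemGraph, *, hab.symm, hbc.symm, hcd.symm, hea.symm, heb.symm, hec.symm, hed.symm,
      mt G.adj_symm hac, mt G.adj_symm had, mt G.adj_symm hbd]

end

structure IsNearBuilding (G : SimpleGraph V) (j : ℕ) (v : V) (w : ℕ → V) : Prop where
  four_le : 4 ≤ j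
  inj : ∀ a b, a < j → b < j → w a = w b → a = b
  apex_ne : ∀ a, a < j → v ≠ w a
  adj_apex_first : G.Adj v (w 0)
  adj_apex_last : G.Adj v (w (j - 1))
  adj_first_last : G.Adj (w 0) (w (j - 1))
  not_adj_apex : ∀ a, 0 < a → a < j - 1 → ¬ G.Adj v (w a)
  adj_succ : ∀ a, a + 1 < j → G.Adj (w a) (w (a + 1))
  adj_cases : ∀ a b, a < b → b < j → G.Adj (w a) (w b) →
    b = a + 1 ∨ (a = 0 ∧ b = j - 1) ∨ (b = j - 1 ∧ 1 ≤ a ∧ a ≤ j - 3)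

theorem HasNearBuilding.exists_isNearBuilding {G : SimpleGraph V} (h : HasNearBuilding G) :
    ∃ j v w, IsNearBuilding G j v w := by
  obtain ⟨j, v, w, h₁, h₂, h₃, h₄, h₅, h₆, h₇, h₈, h₉⟩ := h
  exact ⟨j, v, w, h₁, h₂, h₃, h₄, h₅, h₆, h₇, h₈, h₉⟩

namespace IsNearBuilding

variable {G : SimpleGraph V} {j : ℕ} {v : V} {w : ℕ → V}

theorem shift (hw : IsNearBuilding G j v w) (hj : 5 ≤ j) (h1 : G.Adj (w 1) (w (j - 1))) :
    IsNearBuilding G (j - 1) (w 0) (fun a => w (a + 1)) where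
  four_le := by omega
  inj a b ha hb h := by have := hw.inj _ _ (by omega) (by omega) h; omega
  apex_ne a ha h := by have := hw.inj _ _ (by omega) (by omega) h; omega
  adj_apex_first := hw.adj_succ 0 (by omega)
  adj_apex_last := by rw [Nat.sub_add_cancel (by omega)]; exact hw.adj_first_last
  adj_first_last := by rwa [Nat.sub_add_cancel (by omega)]
  not_adj_apex a ha0 ha h := by
    rcases hw.adj_cases _ _ (by omega) (by omega) h with _ | _ | _ <;> omega
  adj_succ a ha := hw.adj_succ (a + 1) (by omega)
  adj_cases a b hab hb h := by
    rcases hw.adj_cases _ _ (by omega) (by omega) h with _ | _ | _ <;> omega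

theorem truncate (hw : IsNearBuilding G j v w) {a : ℕ} (ha : 2 ≤ a) (haj : a ≤ j - 3)
    (hadj : G.Adj (w a) (w (j - 1))) :
    IsNearBuilding G (a + 2) v (fun b => if b ≤ a then w b else w (j - 1)) where
  four_le := by omega
  inj b c hb hc h := by
    split_ifs at h <;> have := hw.inj _ _ (by omega) (by omega) h <;> omega
  apex_ne b hb := by
    split_ifs
    · exact hw.apex_ne b (by omega)
    · exact hw.apex_ne (j - 1) (by omega)
  adj_apex_first := by simpa using hw.adj_apex_first
  adj_apex_last := by simpa using hw.adj_apex_last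
  adj_first_last := by simpa using hw.adj_first_last
  not_adj_apex b hb0 hb := by
    rw [if_pos (by omega)]
    exact hw.not_adj_apex b hb0 (by omega)
  adj_succ b hb := by
    split_ifs
    · exact hw.adj_succ b (by omega)
    · rwa [show b = a by omega]
    · omega
    · omega
  adj_cases b c hbc hc h := by
    split_ifs at h
    · rcases hw.adj_cases _ _ hbc (by omega) h with _ | _ | _ <;> omega
    · rcases hw.adj_cases _ _ (by omega) (by omega) h with _ | _ | _ <;> omega
    all_goals omega

theorem hasBuilding (hw : IsNearBuilding G j v w)
    (hchordless : ∀ a, 0 < a → a < j - 2 → ¬ G.Adj (w a) (w (j - 1))) : HasBuilding G := by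
  have hj := hw.four_le
  refine hasBuilding_of_adj_iff (k := j + 1) (by omega)
    (fun | 0 => w (j - 1) | 1 => v | a + 2 => w a) ?_ ?_
  · rintro (_ | _ | a) (_ | _ | b) ha hb h <;> simp only at h
    all_goals first
      | rfl
      | exact absurd h (hw.apex_ne _ (by omega))
      | exact absurd h.symm (hw.apex_ne _ (by omega))
      | (have := hw.inj _ _ (by omega) (by omega) h; omega)
  · rintro (_ | _ | a) (_ | _ | b) hab hb <;> simp only [true_and] <;> try omega
    · simpa using hw.adj_apex_last.symm
    · refine ⟨fun h => ?_, fun h => ?_⟩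
      · by_contra hb'
        exact hchordless b (by omega) (by omega) h.symm
      · rcases (show b = 0 ∨ b = j - 2 by omega) with rfl | rfl
        · exact hw.adj_first_last.symm
        · have h := hw.adj_succ (j - 2) (by omega)
          rw [show j - 2 + 1 = j - 1 by omega] at h
          exact h.symm
    · refine ⟨fun h => ?_, fun h => ?_⟩
      · by_contra hb'
        exact hw.not_adj_apex b (by omega) (by omega) h
      · obtain rfl : b = 0 := by omega
        exact hw.adj_apex_first
    · refine ⟨fun h => ?_, fun h => ?_⟩
      · rcases hw.adj_cases a b (by omega) (by omega) h with _ | _ | _ <;> omega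
      · obtain rfl : b = a + 1 := by omega
        exact hw.adj_succ a (by omega)

theorem nonempty_gemGraph_embedding (hw : IsNearBuilding G 4 v w) (h1 : G.Adj (w 1) (w 3)) :
    Nonempty (gemGraph ↪g G) :=
  nonempty_gemGraph_embedding_of_adj hw.adj_apex_first (hw.adj_succ 0 (by omega))
    (hw.adj_succ 1 (by omega)) hw.adj_apex_last.symm hw.adj_first_last.symm h1.symm
    (hw.adj_succ 2 (by omega)).symm (hw.not_adj_apex 1 (by omega) (by omega))
    (hw.not_adj_apex 2 (by omega) (by omega))
    (fun h => by rcases hw.adj_cases 0 2 (by omega) (by omega) h with _ | _ | _ <;> omega)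
    (hw.apex_ne 1 (by omega)) (hw.apex_ne 2 (by omega))
    (fun h => by have := hw.inj 0 2 (by omega) (by omega) h; omega)

end IsNearBuilding

/-- a graph containing an induced near building contains an induced
building or an induced gem; equivalently, a (building, gem)-free graph contains
no induced near building. -/
theorem near_building (G : SimpleGraph V) (h : HasNearBuilding G) :
    HasBuilding G ∨ Nonempty (gemGraph ↪g G) := by
  obtain ⟨j, v, w, hw⟩ := h.exists_isNearBuilding
  induction j using Nat.strong_induction_on generalizing v w with
  | _ j ih =>
    by_cases h1 : G.Adj (w 1) (w (j - 1))
    · rcases hw.four_le.eq_or_lt with rfl | hj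
      · exact Or.inr (hw.nonempty_gemGraph_embedding h1)
      · exact ih _ (by omega) _ _ (hw.shift hj h1)
    by_cases hchord : ∃ a, 2 ≤ a ∧ a ≤ j - 3 ∧ G.Adj (w a) (w (j - 1))
    · obtain ⟨a, ha, haj, hadj⟩ := hchord
      exact ih _ (by omega) _ _ (hw.truncate ha haj hadj)
    refine Or.inl (hw.hasBuilding fun a ha0 ha hadj => ?_)
    rcases (show a = 1 ∨ 2 ≤ a by omega) with rfl | ha2
    · exact h1 hadj
    · exact hchord ⟨a, ha2, by omega, hadj⟩
end

section
/- LBFS property: If σ = v_1 ... v_n is a lexicographic breadth-first search ordering of a graph G, and a, b, c are vertices with a < b < c in σ, ac ∈ E(G), and bc ∉ E(G), then there exists a vertex d with c < d in σ such that bd ∈ E(G) and ad ∉ E(G). -/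
open SimpleGraph

universe u

variable {V : Type u}

/-- The label of the vertex numbered `k` at the moment number `i` is assigned:
the set of numbers `m > i` of already-numbered neighbours of `σ k`. -/
def lbfsLabel (G : SimpleGraph V) {n : ℕ} (σ : Fin n ≃ V) (i k : Fin n) : Set (Fin n) :=
  {m | i < m ∧ G.Adj (σ m) (σ k)}

/-- `σ` is an LBFS ordering of `G`: when number `i` is assigned, the chosen vertex
`σ i` has a lexicographically largest label (labels are decreasing sequences of
numbers, compared lexicographically from the largest number down) among all
still-unnumbered vertices `σ k`, `k < i`. -/
def IsLBFSOrder (G : SimpleGraph V) {n : ℕ} (σ : Fin n ≃ V) : Prop :=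
  ∀ i k : Fin n, k < i →
    lbfsLabel G σ i k = lbfsLabel G σ i i ∨
    ∃ m, m ∈ lbfsLabel G σ i i ∧ m ∉ lbfsLabel G σ i k ∧
      ∀ m', m < m' → (m' ∈ lbfsLabel G σ i i ↔ m' ∈ lbfsLabel G σ i k)

/-- The witness is the first number at which the labels of `σ i` and `σ k` differ. -/
theorem IsLBFSOrder.exists_gt_mem_lbfsLabel {G : SimpleGraph V} {n : ℕ} {σ : Fin n ≃ V}
    (hσ : IsLBFSOrder G σ) {i k c : Fin n} (hki : k < i) (hck : c ∈ lbfsLabel G σ i k)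
    (hci : c ∉ lbfsLabel G σ i i) :
    ∃ d, c < d ∧ d ∈ lbfsLabel G σ i i ∧ d ∉ lbfsLabel G σ i k := by
  rcases hσ i k hki with heq | ⟨m, hmi, hmk, hagree⟩
  · exact absurd (heq ▸ hck) hci
  · refine ⟨m, ?_, hmi, hmk⟩
    rcases lt_trichotomy c m with hcm | rfl | hmc
    · exact hcm
    · exact absurd hmi hci
    · exact absurd ((hagree c hmc).mpr hck) hci

/-- the fundamental property of LBFS orderings. -/
theorem lbfs_property (G : SimpleGraph V) {n : ℕ} (σ : Fin n ≃ V)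
    (hσ : IsLBFSOrder G σ) (a b c : Fin n) (hab : a < b) (hbc : b < c)
    (hac : G.Adj (σ a) (σ c)) (hbcE : ¬ G.Adj (σ b) (σ c)) :
    ∃ d : Fin n, c < d ∧ G.Adj (σ b) (σ d) ∧ ¬ G.Adj (σ a) (σ d) := by
  obtain ⟨d, hcd, hdb, hda⟩ :=
    hσ.exists_gt_mem_lbfsLabel hab ⟨hbc, hac.symm⟩ fun h => hbcE h.2.symm
  exact ⟨d, hcd, hdb.2.symm, fun hadj => hda ⟨hdb.1, hadj.symm⟩⟩
end

section
/- In the square of the 9-cycle, (C_9)^2, every vertex is the nose of some induced bull. -/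
open SimpleGraph

universe u

variable {V : Type u}

/-- The square of the 9-cycle: `i ~ j` iff their cyclic distance is 1 or 2. -/
def c9sq : SimpleGraph (ZMod 9) :=
  SimpleGraph.fromRel (fun i j => j = i + 1 ∨ j = i + 2)

theorem c9sq_adj_add_right (v a b : ZMod 9) : c9sq.Adj (a + v) (b + v) ↔ c9sq.Adj a b := by
  simp only [c9sq, fromRel_adj, ne_eq, add_left_inj, add_right_comm _ v]

def c9sqAddRight (v : ZMod 9) : c9sq ≃g c9sq :=
  ⟨Equiv.addRight v, c9sq_adj_add_right v _ _⟩

def c9sqBullNoseZero : bullGraph ↪g c9sq :=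
  ⟨⟨![3, 1, 8, 6, 0], by decide⟩, by
    intro a b
    simp only [c9sq, bullGraph, fromRel_adj]
    revert a b
    decide⟩

/-- in `(C₉)²` every vertex is the nose of some induced bull. -/
theorem c9sq_every_vertex_nose (v : ZMod 9) :
    ∃ f : bullGraph ↪g c9sq, f 4 = v :=
  ⟨(c9sqAddRight v).toEmbedding.comp c9sqBullNoseZero, zero_add v⟩
end

section
/- Every (building, gem)-free graph is (building, sun)-free; i.e., a graph with no induced building and no induced gem contains no induced sun. -/
open SimpleGraph

universe u

variable {V : Type u}

theorem ZMod.natCast_ne_natCast_of_lt {k a b : ℕ} (ha : a < k) (hb : b < k) (hab : a ≠ b) :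
    (a : ZMod k) ≠ b := fun h =>
  hab <| by simpa only [ZMod.val_natCast_of_lt, ha, hb] using congrArg ZMod.val h

/-- In a `k`-sun the center `c₁` is adjacent to `d₀, c₀, c₂, d₁`, which induce the path
`d₀ c₀ c₂ d₁`; the non-edges `d₀ c₂` and `c₀ d₁` need `0, 1, 2` distinct, i.e. `3 ≤ k`. -/
def sunGraph.gemEmbedding {k : ℕ} (hk : 3 ≤ k) : gemGraph ↪g sunGraph k :=
  have h01 : (0 : ZMod k) ≠ 1 := by
    exact_mod_cast ZMod.natCast_ne_natCast_of_lt (a := 0) (b := 1) (by omega) (by omega) (by simp)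
  have h02 : (0 : ZMod k) ≠ 2 := by
    exact_mod_cast ZMod.natCast_ne_natCast_of_lt (a := 0) (b := 2) (by omega) (by omega) (by simp)
  have h12 : (1 : ZMod k) ≠ 2 := by
    exact_mod_cast ZMod.natCast_ne_natCast_of_lt (a := 1) (b := 2) (by omega) (by omega) (by simp)
  let f : Fin 5 → ZMod k ⊕ ZMod k := ![.inr 0, .inl 0, .inl 2, .inr 1, .inl 1]
  { toFun := f
    inj' := fun a b hab => by
      fin_cases a <;> fin_cases b <;> simp_all [f, h01.symm, h02.symm, h12.symm]
    map_rel_iff' := fun {a b} => by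
      change (sunGraph k).Adj (f a) (f b) ↔ _
      fin_cases a <;> fin_cases b <;>
        simp [f, gemGraph, sunGraph, h01, h02, h12, h01.symm, h02.symm, h12.symm,
          one_add_one_eq_two] }

theorem HasSun.nonempty_gem_embedding {G : SimpleGraph V} (h : HasSun G) :
    Nonempty (gemGraph ↪g G) :=
  let ⟨_, hk, ⟨e⟩⟩ := h
  ⟨e.comp (sunGraph.gemEmbedding hk)⟩

theorem building_gem_free_sun_free_general (G : SimpleGraph V)
    (hgem : IsEmpty (gemGraph ↪g G)) :
    ¬ HasSun G :=
  fun h => not_isEmpty_iff.mpr h.nonempty_gem_embedding hgem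

/-- every (building, gem)-free graph is (building, sun)-free. -/
theorem building_gem_free_sun_free (G : SimpleGraph V)
    (hBF : BuildingFree G) (hgem : IsEmpty (gemGraph ↪g G)) :
    ¬ HasSun G :=
  building_gem_free_sun_free_general G hgem
end
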